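/- arXiv:2602.13025 — 3 statements merged into one kernel-verified Lean document; each statement's English description precedes it below -/
import Mathlib

section
/- For any two nonempty compact sets A, B in ℝⁿ, the n-th root of the volume of the Minkowski sum A + B is at least the sum of the n-th roots of the volumes of A and B: Vol(A+B)^(1/n) ≥ Vol(A)^(1/n) + Vol(B)^(1/n). -/
/-!
In dimension one, the Brunn–Minkowski inequality `|S + T| ≥ |S| + |T|` holds because `S + T`
contains a translate of `S` and a translate of `T` meeting in a single point. Applied to the
level sets of `f` and `g`, after rescaling `g` so that both have the same supremum, it gives the
Prékopa–Leindler inequality `(∫ f) ^ (1 - t) * (∫ g) ^ t ≤ ∫ h` whenever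
`f x ^ (1 - t) * g y ^ t ≤ h ((1 - t) • x + t • y)`; by Fubini this inequality passes to products,
hence to `ℝⁿ`. For indicator functions it reads `|A| ^ (1 - t) * |B| ^ t ≤ |(1 - t) • A + t • B|`,
and rescaling `A` and `B` to unit volume with `t = |B| ^ (1/n) / (|A| ^ (1/n) + |B| ^ (1/n))`
turns this into the additive form.
-/

open MeasureTheory Pointwise Set ENNReal Module
open scoped NNReal

theorem ENNReal.min_le_rpow_mul_rpow {t : ℝ} (ht₀ : 0 ≤ t) (ht₁ : t ≤ 1) (a b : ℝ≥0∞) :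
    min a b ≤ a ^ (1 - t) * b ^ t :=
  calc min a b = min a b ^ (1 - t) * min a b ^ t := by
        rw [← ENNReal.rpow_add_of_nonneg _ _ (sub_nonneg.2 ht₁) ht₀, sub_add_cancel,
          ENNReal.rpow_one]
    _ ≤ a ^ (1 - t) * b ^ t :=
        mul_le_mul' (rpow_le_rpow (min_le_left a b) (sub_nonneg.2 ht₁))
          (rpow_le_rpow (min_le_right a b) ht₀)

theorem ENNReal.geom_mean_le_arith_mean2_weighted {t : ℝ} (ht₀ : 0 < t) (ht₁ : t < 1)
    (a b : ℝ≥0∞) : a ^ (1 - t) * b ^ t ≤ ENNReal.ofReal (1 - t) * a + ENNReal.ofReal t * b := by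
  rcases eq_or_ne a ∞ with rfl | ha
  · simp [mul_top, ht₁]
  rcases eq_or_ne b ∞ with rfl | hb
  · simp [mul_top, ht₀]
  lift a to ℝ≥0 using ha
  lift b to ℝ≥0 using hb
  have key := NNReal.geom_mean_le_arith_mean2_weighted (1 - t).toNNReal t.toNNReal a b
    (by rw [← Real.toNNReal_add (sub_nonneg.2 ht₁.le) ht₀.le, sub_add_cancel, Real.toNNReal_one])
  rw [Real.coe_toNNReal _ (sub_nonneg.2 ht₁.le), Real.coe_toNNReal _ ht₀.le] at key
  rw [← coe_rpow_of_nonneg _ (sub_nonneg.2 ht₁.le), ← coe_rpow_of_nonneg _ ht₀.le]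
  unfold ENNReal.ofReal
  exact_mod_cast key

theorem ENNReal.iSup_rpow_mul_iSup_rpow_le {a b : ℕ → ℝ≥0∞} {c : ℝ≥0∞} {p q : ℝ}
    (hp : 0 < p) (hq : 0 < q) (ha : Monotone a) (hb : Monotone b)
    (h : ∀ k, a k ^ p * b k ^ q ≤ c) : (⨆ k, a k) ^ p * (⨆ k, b k) ^ q ≤ c := by
  rw [(monotone_rpow_of_nonneg hp.le).map_iSup_of_continuousAt
      continuous_rpow_const.continuousAt (zero_rpow_of_pos hp),
    (monotone_rpow_of_nonneg hq.le).map_iSup_of_continuousAt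
      continuous_rpow_const.continuousAt (zero_rpow_of_pos hq), ENNReal.iSup_mul]
  refine iSup_le fun i => ?_
  rw [ENNReal.mul_iSup]
  refine iSup_le fun j => le_trans ?_ (h (max i j))
  exact mul_le_mul' (rpow_le_rpow (ha (le_max_left i j)) hp.le)
    (rpow_le_rpow (hb (le_max_right i j)) hq.le)

theorem lintegral_eq_lintegral_meas_ofReal_lt {α : Type*} [MeasurableSpace α] (μ : Measure α)
    [SFinite μ] {f : α → ℝ≥0∞} (hf : Measurable f) :
    ∫⁻ x, f x ∂μ = ∫⁻ s in Ioi 0, μ {x | ENNReal.ofReal s < f x} := by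
  set U : Set (α × ℝ) := {p | ENNReal.ofReal p.2 < f p.1}
  have hU : MeasurableSet U :=
    measurableSet_lt (ENNReal.measurable_ofReal.comp measurable_snd) (hf.comp measurable_fst)
  have hvol : ∀ a : ℝ≥0∞, volume.restrict (Ioi (0 : ℝ)) {s | ENNReal.ofReal s < a} = a := by
    intro a
    rcases eq_or_ne a ∞ with rfl | ha
    · simp
    have : {s : ℝ | ENNReal.ofReal s < a} ∩ Ioi 0 = Ioo 0 a.toReal := by
      ext s
      simp only [mem_inter_iff, mem_ofPred_eq, mem_Ioi, mem_Ioo]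
      constructor
      · rintro ⟨h, hs⟩; exact ⟨hs, (ENNReal.ofReal_lt_iff_lt_toReal hs.le ha).1 h⟩
      · rintro ⟨hs, h⟩; exact ⟨(ENNReal.ofReal_lt_iff_lt_toReal hs.le ha).2 h, hs⟩
    rw [Measure.restrict_apply' measurableSet_Ioi, this, Real.volume_Ioo, sub_zero,
      ofReal_toReal ha]
  calc ∫⁻ x, f x ∂μ = ∫⁻ x, (∫⁻ s in Ioi 0, U.indicator 1 (x, s)) ∂μ := by
        refine lintegral_congr fun x => ?_
        rw [← hvol (f x)]
        exact (lintegral_indicator_one (measurable_prodMk_left hU)).symm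
    _ = ∫⁻ s in Ioi 0, (∫⁻ x, U.indicator 1 (x, s) ∂μ) :=
        lintegral_lintegral_swap (f := fun x s => U.indicator 1 (x, s))
          (measurable_const.indicator hU).aemeasurable
    _ = ∫⁻ s in Ioi 0, μ {x | ENNReal.ofReal s < f x} :=
        lintegral_congr fun s => lintegral_indicator_one (measurable_prodMk_right hU)

def PrekopaLeindler {E : Type*} [AddCommMonoid E] [Module ℝ E] [MeasurableSpace E]
    (μ : Measure E) (t : ℝ) : Prop :=
  ∀ f g h : E → ℝ≥0∞, Measurable f → Measurable g → Measurable h →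
    (∀ x y, f x ^ (1 - t) * g y ^ t ≤ h ((1 - t) • x + t • y)) →
    (∫⁻ x, f x ∂μ) ^ (1 - t) * (∫⁻ x, g x ∂μ) ^ t ≤ ∫⁻ x, h x ∂μ

namespace Real

theorem volume_add_volume_le_volume_add_of_isCompact {K L : Set ℝ} (hK : IsCompact K)
    (hL : IsCompact L) (hK' : K.Nonempty) (hL' : L.Nonempty) :
    volume K + volume L ≤ volume (K + L) := by
  -- The translates `K + sup L` and `inf K + L` lie in `K + L` and meet in one point only.
  set m := sInf K
  set M := sSup L
  have hinter : (K + {M}) ∩ ({m} + L) ⊆ {m + M} := by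
    rintro _ ⟨⟨k, hk, _, rfl, rfl⟩, ⟨_, rfl, l, hl, hkl⟩⟩
    have := csInf_le hK.bddBelow hk
    have := le_csSup hL.bddAbove hl
    rw [mem_singleton_iff]
    linarith
  calc volume K + volume L = volume (K + {M}) + volume ({m} + L) := by
        simp [add_singleton, singleton_add]
    _ = volume ((K + {M}) ∪ ({m} + L)) := by
        rw [← measure_union_add_inter _ (isCompact_singleton.add hL).measurableSet,
          measure_mono_null hinter (measure_singleton _), add_zero]
    _ ≤ volume (K + L) := measure_mono <| union_subset
        (add_subset_add_left (singleton_subset_iff.2 (hL.sSup_mem hL')))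
        (add_subset_add_right (singleton_subset_iff.2 (hK.sInf_mem hK')))

theorem volume_add_volume_le_volume_add {S T : Set ℝ} (hS : MeasurableSet S)
    (hT : MeasurableSet T) (hS' : S.Nonempty) (hT' : T.Nonempty) :
    volume S + volume T ≤ volume (S + T) := by
  obtain ⟨s, hs⟩ := hS'
  obtain ⟨u, hu⟩ := hT'
  rw [hS.measure_eq_iSup_isCompact, hT.measure_eq_iSup_isCompact]
  simp only [iSup_and']
  refine ENNReal.biSup_add_biSup_le' ⟨∅, empty_subset S, isCompact_empty⟩
    ⟨∅, empty_subset T, isCompact_empty⟩ fun K ⟨hKS, hK⟩ L ⟨hLT, hL⟩ => ?_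
  calc volume K + volume L ≤ volume (insert s K) + volume (insert u L) :=
        add_le_add (measure_mono (subset_insert s K)) (measure_mono (subset_insert u L))
    _ ≤ volume (insert s K + insert u L) :=
        volume_add_volume_le_volume_add_of_isCompact (hK.insert s) (hL.insert u)
          (insert_nonempty s K) (insert_nonempty u L)
    _ ≤ volume (S + T) :=
        measure_mono (add_subset_add (insert_subset hs hKS) (insert_subset hu hLT))

variable {t : ℝ} {f g h : ℝ → ℝ≥0∞}

theorem lintegral_add_lintegral_le_of_min_le (ht₀ : 0 ≤ t) (ht₁ : t ≤ 1) (hf : Measurable f)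
    (hg : Measurable g) (hh : Measurable h) (hfg : ⨆ x, f x = ⨆ x, g x)
    (hfgh : ∀ x y, min (f x) (g y) ≤ h ((1 - t) • x + t • y)) :
    ENNReal.ofReal (1 - t) * (∫⁻ x, f x) + ENNReal.ofReal t * ∫⁻ x, g x ≤ ∫⁻ x, h x := by
  have hlevel : ∀ s : ℝ, ENNReal.ofReal (1 - t) * volume {x | ENNReal.ofReal s < f x} +
      ENNReal.ofReal t * volume {x | ENNReal.ofReal s < g x} ≤
      volume {x | ENNReal.ofReal s < h x} := by
    intro s
    rcases lt_or_ge (ENNReal.ofReal s) (⨆ x, f x) with hs | hs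
    · have hS : ((1 - t) • {x | ENNReal.ofReal s < f x}).Nonempty :=
        Nonempty.smul_set (lt_iSup_iff.1 hs)
      have hT : (t • {x | ENNReal.ofReal s < g x}).Nonempty :=
        Nonempty.smul_set (lt_iSup_iff.1 (hs.trans_eq hfg))
      calc _ = volume ((1 - t) • {x | ENNReal.ofReal s < f x}) +
            volume (t • {x | ENNReal.ofReal s < g x}) := by
            simp [Measure.addHaar_smul_of_nonneg _ (sub_nonneg.2 ht₁),
              Measure.addHaar_smul_of_nonneg _ ht₀]
        _ ≤ _ := volume_add_volume_le_volume_add ((hf measurableSet_Ioi).const_smul₀ _)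
            ((hg measurableSet_Ioi).const_smul₀ _) hS hT
        _ ≤ _ := measure_mono <| by
            rintro _ ⟨_, ⟨x, hx, rfl⟩, _, ⟨y, hy, rfl⟩, rfl⟩
            exact (lt_min hx hy).trans_le (hfgh x y)
    · have hempty : ∀ u : ℝ → ℝ≥0∞, ⨆ x, u x ≤ ENNReal.ofReal s →
          {x | ENNReal.ofReal s < u x} = ∅ := fun u hu =>
        eq_empty_of_forall_notMem fun x hx => (hx.trans_le (le_iSup u x)).not_ge hu
      simp [hempty f hs, hempty g (hfg ▸ hs)]
  have hmeas : ∀ u : ℝ → ℝ≥0∞, Measurable fun s : ℝ => volume {x | ENNReal.ofReal s < u x} :=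
    fun u => Antitone.measurable fun a b hab =>
      measure_mono fun x hx => (ENNReal.ofReal_le_ofReal hab).trans_lt hx
  rw [lintegral_eq_lintegral_meas_ofReal_lt volume hf,
    lintegral_eq_lintegral_meas_ofReal_lt volume hg,
    lintegral_eq_lintegral_meas_ofReal_lt volume hh, ← lintegral_const_mul _ (hmeas f),
    ← lintegral_const_mul _ (hmeas g), ← lintegral_add_left ((hmeas f).const_mul _)]
  exact lintegral_mono hlevel

theorem prekopaLeindler_of_iSup_eq (ht₀ : 0 < t) (ht₁ : t < 1) (hf : Measurable f)
    (hg : Measurable g) (hh : Measurable h) (hfg : ⨆ x, f x = ⨆ x, g x)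
    (hfgh : ∀ x y, f x ^ (1 - t) * g y ^ t ≤ h ((1 - t) • x + t • y)) :
    (∫⁻ x, f x) ^ (1 - t) * (∫⁻ x, g x) ^ t ≤ ∫⁻ x, h x :=
  (ENNReal.geom_mean_le_arith_mean2_weighted ht₀ ht₁ _ _).trans <|
    lintegral_add_lintegral_le_of_min_le ht₀.le ht₁.le hf hg hh hfg fun x y =>
      (ENNReal.min_le_rpow_mul_rpow ht₀.le ht₁.le _ _).trans (hfgh x y)

theorem prekopaLeindler_of_iSup_ne_top (ht₀ : 0 < t) (ht₁ : t < 1) (hf : Measurable f)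
    (hg : Measurable g) (hh : Measurable h) (hf' : ⨆ x, f x ≠ ∞) (hg' : ⨆ x, g x ≠ ∞)
    (hfgh : ∀ x y, f x ^ (1 - t) * g y ^ t ≤ h ((1 - t) • x + t • y)) :
    (∫⁻ x, f x) ^ (1 - t) * (∫⁻ x, g x) ^ t ≤ ∫⁻ x, h x := by
  rcases eq_or_ne (⨆ x, f x) 0 with hF | hF
  · simp [ENNReal.iSup_eq_zero.1 hF, ENNReal.zero_rpow_of_pos (sub_pos.2 ht₁)]
  rcases eq_or_ne (⨆ x, g x) 0 with hG | hG
  · simp [ENNReal.iSup_eq_zero.1 hG, ENNReal.zero_rpow_of_pos ht₀]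
  -- Rescaling `g` by `c` equalises the suprema and multiplies both sides by `c ^ t`.
  set c := (⨆ x, f x) / ⨆ x, g x
  have hc₀ : c ^ t ≠ 0 := (rpow_pos (ENNReal.div_pos hF hg') (div_ne_top hf' hG)).ne'
  have hc : c ^ t ≠ ∞ := rpow_ne_top_of_nonneg ht₀.le (div_ne_top hf' hG)
  have key := prekopaLeindler_of_iSup_eq ht₀ ht₁ hf (hg.const_mul c) (hh.const_mul (c ^ t))
    (by rw [← ENNReal.mul_iSup, ENNReal.div_mul_cancel hG hg']) fun x y => by
      rw [ENNReal.mul_rpow_of_nonneg _ _ ht₀.le, mul_left_comm]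
      exact mul_le_mul_right (hfgh x y) _
  rw [lintegral_const_mul _ hg, lintegral_const_mul _ hh, ENNReal.mul_rpow_of_nonneg _ _ ht₀.le,
    mul_left_comm] at key
  exact (ENNReal.mul_le_mul_iff_right hc₀ hc).1 key

theorem prekopaLeindler (ht₀ : 0 < t) (ht₁ : t < 1) : PrekopaLeindler (volume : Measure ℝ) t := by
  intro f g h hf hg hh hfgh
  have hmono : ∀ u : ℝ → ℝ≥0∞, Monotone fun k : ℕ => ∫⁻ x, min (u x) k := fun u _ _ hkl =>
    lintegral_mono fun x => min_le_min_left _ (Nat.cast_le.2 hkl)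
  have hsup : ∀ u : ℝ → ℝ≥0∞, Measurable u → ⨆ k : ℕ, ∫⁻ x, min (u x) k = ∫⁻ x, u x := by
    intro u hu
    rw [← lintegral_iSup (fun k => hu.min measurable_const)
      fun _ _ hkl x => min_le_min_left _ (Nat.cast_le.2 hkl)]
    simp_rw [← inf_iSup_eq, ENNReal.iSup_natCast, inf_top_eq]
  rw [← hsup f hf, ← hsup g hg]
  refine ENNReal.iSup_rpow_mul_iSup_rpow_le (sub_pos.2 ht₁) ht₀ (hmono f) (hmono g) fun k =>
    prekopaLeindler_of_iSup_ne_top ht₀ ht₁ (hf.min measurable_const) (hg.min measurable_const) hh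
      (ne_top_of_le_ne_top (natCast_ne_top k) (iSup_le fun x => min_le_right _ _))
      (ne_top_of_le_ne_top (natCast_ne_top k) (iSup_le fun x => min_le_right _ _))
      fun x y => (mul_le_mul' (ENNReal.rpow_le_rpow (min_le_left _ _) (sub_pos.2 ht₁).le)
        (ENNReal.rpow_le_rpow (min_le_left _ _) ht₀.le)).trans (hfgh x y)

end Real

namespace PrekopaLeindler

variable {E F : Type*} [AddCommMonoid E] [Module ℝ E] [MeasurableSpace E]
  [AddCommMonoid F] [Module ℝ F] [MeasurableSpace F] {μ : Measure E} {ν : Measure F} {t : ℝ}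

theorem dirac_zero : PrekopaLeindler (Measure.dirac (0 : E)) t := by
  intro f g h hf hg hh hfgh
  simpa [lintegral_dirac' _ hf, lintegral_dirac' _ hg, lintegral_dirac' _ hh] using hfgh 0 0

theorem prod [SFinite μ] [SFinite ν] (hμ : PrekopaLeindler μ t) (hν : PrekopaLeindler ν t) :
    PrekopaLeindler (μ.prod ν) t := by
  intro f g h hf hg hh hfgh
  rw [lintegral_prod _ hf.aemeasurable, lintegral_prod _ hg.aemeasurable,
    lintegral_prod _ hh.aemeasurable]
  refine hμ _ _ _ hf.lintegral_prod_right' hg.lintegral_prod_right' hh.lintegral_prod_right'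
    fun x y => hν _ _ _ (hf.comp measurable_prodMk_left) (hg.comp measurable_prodMk_left)
      (hh.comp measurable_prodMk_left) fun x' y' => ?_
  simpa using hfgh (x, x') (y, y')

theorem map (e : E →ₗ[ℝ] F) (he : MeasurePreserving e μ ν) (hμ : PrekopaLeindler μ t) :
    PrekopaLeindler ν t := by
  intro f g h hf hg hh hfgh
  rw [← he.lintegral_comp hf, ← he.lintegral_comp hg, ← he.lintegral_comp hh]
  exact hμ _ _ _ (hf.comp he.measurable) (hg.comp he.measurable) (hh.comp he.measurable)
    fun x y => by simpa using hfgh (e x) (e y)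

theorem measure_rpow_mul_rpow_le (hμ : PrekopaLeindler μ t) (ht₀ : 0 < t) (ht₁ : t < 1)
    {A B : Set E} (hA : MeasurableSet A) (hB : MeasurableSet B) :
    μ A ^ (1 - t) * μ B ^ t ≤ μ ((1 - t) • A + t • B) := by
  set C := toMeasurable μ ((1 - t) • A + t • B)
  have key := hμ (A.indicator 1) (B.indicator 1) (C.indicator 1) (measurable_one.indicator hA)
    (measurable_one.indicator hB) (measurable_one.indicator (measurableSet_toMeasurable _ _))
    fun x y => by
      by_cases hx : x ∈ A
      · by_cases hy : y ∈ B
        · have : (1 - t) • x + t • y ∈ C :=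
            subset_toMeasurable _ _ (add_mem_add (smul_mem_smul_set hx) (smul_mem_smul_set hy))
          simp [hx, hy, this]
        · simp [hy, ENNReal.zero_rpow_of_pos ht₀]
      · simp [hx, ENNReal.zero_rpow_of_pos (sub_pos.2 ht₁)]
  rwa [lintegral_indicator_one hA, lintegral_indicator_one hB,
    lintegral_indicator_one (measurableSet_toMeasurable _ _), measure_toMeasurable] at key

end PrekopaLeindler

theorem prekopaLeindler_volume_pi {t : ℝ} (ht₀ : 0 < t) (ht₁ : t < 1) (n : ℕ) :
    PrekopaLeindler (volume : Measure (Fin n → ℝ)) t := by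
  induction n with
  | zero =>
    rw [Measure.volume_pi_eq_dirac (α := fun _ => ℝ) 0]
    exact PrekopaLeindler.dirac_zero
  | succ n ih =>
    refine ((Real.prekopaLeindler ht₀ ht₁).prod ih).map
      (Fin.consLinearEquiv ℝ fun _ : Fin (n + 1) => ℝ).toLinearMap ?_
    have hcons : ⇑(Fin.consLinearEquiv ℝ fun _ : Fin (n + 1) => ℝ) =
        (MeasurableEquiv.piFinSuccAbove (fun _ : Fin (n + 1) => ℝ) 0).symm := by
      funext p
      exact (Fin.insertNth_zero' _ _).symm
    rw [LinearEquiv.coe_toLinearMap, hcons]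
    exact (volume_preserving_piFinSuccAbove (fun _ : Fin (n + 1) => ℝ) 0).symm

theorem prekopaLeindler_volume_euclideanSpace {t : ℝ} (ht₀ : 0 < t) (ht₁ : t < 1) (n : ℕ) :
    PrekopaLeindler (volume : Measure (EuclideanSpace ℝ (Fin n))) t :=
  (prekopaLeindler_volume_pi ht₀ ht₁ n).map
    (WithLp.linearEquiv 2 ℝ (Fin n → ℝ)).symm.toLinearMap (PiLp.volume_preserving_toLp (Fin n))

theorem measure_le_measure_add {G : Type*} [AddGroup G] [MeasurableSpace G] [MeasurableAdd G]
    (μ : Measure G) [μ.IsAddLeftInvariant] {A B : Set G} {a : G} (ha : a ∈ A) :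
    μ B ≤ μ (A + B) :=
  calc μ B = μ ({a} + B) := by simp [singleton_add]
    _ ≤ μ (A + B) := measure_mono (add_subset_add_right (singleton_subset_iff.2 ha))

section BrunnMinkowski

variable {E : Type*} [NormedAddCommGroup E] [NormedSpace ℝ E] [MeasurableSpace E] [BorelSpace E]
  [FiniteDimensional ℝ E] {μ : Measure E} [μ.IsAddHaarMeasure]

theorem addHaar_inv_rpow_smul (hE : finrank ℝ E ≠ 0) {S : Set E} (hS₀ : μ S ≠ 0)
    (hS : μ S ≠ ∞) : μ (((μ S).toReal ^ (finrank ℝ E : ℝ)⁻¹)⁻¹ • S) = 1 := by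
  rw [Measure.addHaar_smul_of_nonneg _ (by positivity), inv_pow,
    Real.rpow_inv_natCast_pow ENNReal.toReal_nonneg hE,
    ENNReal.ofReal_inv_of_pos (ENNReal.toReal_pos hS₀ hS), ofReal_toReal hS,
    ENNReal.inv_mul_cancel hS₀ hS]

theorem addHaar_rpow_add_rpow_le_of_pos (hE : finrank ℝ E ≠ 0)
    (hμ : ∀ t, 0 < t → t < 1 → PrekopaLeindler μ t) {A B : Set E} (hA : MeasurableSet A)
    (hB : MeasurableSet B) (hA₀ : μ A ≠ 0) (hA₁ : μ A ≠ ∞) (hB₀ : μ B ≠ 0) (hB₁ : μ B ≠ ∞) :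
    μ A ^ (finrank ℝ E : ℝ)⁻¹ + μ B ^ (finrank ℝ E : ℝ)⁻¹ ≤ μ (A + B) ^ (finrank ℝ E : ℝ)⁻¹ := by
  set d := finrank ℝ E
  set a := (μ A).toReal ^ (d : ℝ)⁻¹
  set b := (μ B).toReal ^ (d : ℝ)⁻¹
  have ha : 0 < a := Real.rpow_pos_of_pos (ENNReal.toReal_pos hA₀ hA₁) _
  have hb : 0 < b := Real.rpow_pos_of_pos (ENNReal.toReal_pos hB₀ hB₁) _
  set t := b / (a + b)
  have ht₀ : 0 < t := by positivity
  have ht₁ : t < 1 := (div_lt_one (by positivity)).2 (by linarith)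
  -- `a⁻¹ • A` and `b⁻¹ • B` have unit measure, and their `t`-combination is `(a + b)⁻¹ • (A + B)`.
  have hset : (1 - t) • a⁻¹ • A + t • b⁻¹ • B = (a + b)⁻¹ • (A + B) := by
    rw [smul_smul, smul_smul, smul_add]
    congr 2
    · simp only [t]; field_simp; ring
    · simp only [t]; field_simp
  have key := (hμ t ht₀ ht₁).measure_rpow_mul_rpow_le ht₀ ht₁ (hA.const_smul₀ a⁻¹)
    (hB.const_smul₀ b⁻¹)
  rw [addHaar_inv_rpow_smul hE hA₀ hA₁, addHaar_inv_rpow_smul hE hB₀ hB₁, one_rpow, one_rpow,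
    one_mul, hset, Measure.addHaar_smul_of_nonneg _ (by positivity)] at key
  have hab : ENNReal.ofReal ((a + b) ^ d) ≤ μ (A + B) := by
    rw [inv_pow, ENNReal.ofReal_inv_of_pos (by positivity)] at key
    calc ENNReal.ofReal ((a + b) ^ d) ≤ ENNReal.ofReal ((a + b) ^ d) *
          ((ENNReal.ofReal ((a + b) ^ d))⁻¹ * μ (A + B)) := le_mul_of_one_le_right' key
      _ = μ (A + B) := ENNReal.mul_inv_cancel_left (by positivity) ofReal_ne_top
  calc μ A ^ (d : ℝ)⁻¹ + μ B ^ (d : ℝ)⁻¹ = ENNReal.ofReal (a + b) := by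
        rw [← ofReal_toReal hA₁, ← ofReal_toReal hB₁,
          ofReal_rpow_of_nonneg toReal_nonneg (by positivity),
          ofReal_rpow_of_nonneg toReal_nonneg (by positivity), ofReal_add ha.le hb.le]
    _ = ENNReal.ofReal ((a + b) ^ d) ^ (d : ℝ)⁻¹ := by
        rw [ofReal_rpow_of_nonneg (by positivity) (by positivity),
          Real.pow_rpow_inv_natCast (by positivity) hE]
    _ ≤ μ (A + B) ^ (d : ℝ)⁻¹ := ENNReal.rpow_le_rpow hab (by positivity)

theorem addHaar_rpow_add_rpow_le (hE : finrank ℝ E ≠ 0)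
    (hμ : ∀ t, 0 < t → t < 1 → PrekopaLeindler μ t) {A B : Set E} (hA : MeasurableSet A)
    (hB : MeasurableSet B) (hA' : A.Nonempty) (hB' : B.Nonempty) :
    μ A ^ (finrank ℝ E : ℝ)⁻¹ + μ B ^ (finrank ℝ E : ℝ)⁻¹ ≤ μ (A + B) ^ (finrank ℝ E : ℝ)⁻¹ := by
  have hr : 0 < (finrank ℝ E : ℝ)⁻¹ := by positivity
  have hAB : μ A ≤ μ (A + B) := add_comm B A ▸ measure_le_measure_add μ hB'.some_mem
  have hBA : μ B ≤ μ (A + B) := measure_le_measure_add μ hA'.some_mem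
  rcases eq_or_ne (μ A) 0 with hA₀ | hA₀
  · simpa [hA₀, zero_rpow_of_pos hr] using rpow_le_rpow hBA hr.le
  rcases eq_or_ne (μ B) 0 with hB₀ | hB₀
  · simpa [hB₀, zero_rpow_of_pos hr] using rpow_le_rpow hAB hr.le
  rcases eq_or_ne (μ A) ∞ with hA₁ | hA₁
  · simp [top_le_iff.1 (hA₁ ▸ hAB), top_rpow_of_pos hr]
  rcases eq_or_ne (μ B) ∞ with hB₁ | hB₁
  · simp [top_le_iff.1 (hB₁ ▸ hBA), top_rpow_of_pos hr]
  exact addHaar_rpow_add_rpow_le_of_pos hE hμ hA hB hA₀ hA₁ hB₀ hB₁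

end BrunnMinkowski

/-- Brunn–Minkowski inequality: for nonempty compact sets `A, B ⊆ ℝⁿ`,
`Vol(A + B)^(1/n) ≥ Vol(A)^(1/n) + Vol(B)^(1/n)`, where `A + B` is the Minkowski sum. -/
theorem brunn_minkowski (n : ℕ) (hn : 0 < n)
    (A B : Set (EuclideanSpace ℝ (Fin n)))
    (hA : IsCompact A) (hB : IsCompact B)
    (hAne : A.Nonempty) (hBne : B.Nonempty) :
    (volume A).toReal ^ ((1 : ℝ) / n) + (volume B).toReal ^ ((1 : ℝ) / n)
      ≤ (volume (A + B)).toReal ^ ((1 : ℝ) / n) := by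
  have key := addHaar_rpow_add_rpow_le (by simpa using hn.ne')
    (fun t ht₀ ht₁ => prekopaLeindler_volume_euclideanSpace ht₀ ht₁ n)
    hA.measurableSet hB.measurableSet hAne hBne
  rw [finrank_euclideanSpace_fin, ← one_div] at key
  have hr : 0 ≤ (1 : ℝ) / n := by positivity
  rw [toReal_rpow, toReal_rpow, toReal_rpow, ← toReal_add (rpow_ne_top_of_nonneg hr
    hA.measure_lt_top.ne) (rpow_ne_top_of_nonneg hr hB.measure_lt_top.ne)]
  exact toReal_mono (rpow_ne_top_of_nonneg hr (hA.add hB).measure_lt_top.ne) key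
end

section
/- For a positive measurable f with suitable integrability, the derivative of the L^p norm with respect to p satisfies d/dp ‖f‖_{L^p(dμ)} = (1/p²)·‖f‖_{L^p(dμ)}^{1−p} · Ent_μ(|f|^p), where Ent_μ(g) = ∫ g log g dμ − (∫ g dμ)·log(∫ g dμ). -/
/-!
Write `J q = ∫ f^q dμ`. Since `f^q |log f| ≤ (f^c + f^d) |log f|` for `q ∈ [c, d]`, and the
right side is integrable by the hypothesis on `f^q log(f^q) = q f^q log f` at `q = c, d`,
differentiation under the integral gives `J'(p) = ∫ f^p log f dμ`. The chain rule for
`J(q)^(1/q) = exp (log J(q) / q)` then yields the entropy formula, since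
`p J'(p) = ∫ f^p log(f^p) dμ`. If `μ = 0` both sides vanish.
-/

open MeasureTheory Set

namespace Real

lemma rpow_le_rpow_add_rpow_of_mem_Icc {x c d q : ℝ} (hx : 0 < x) (hq : q ∈ Icc c d) :
    x ^ q ≤ x ^ c + x ^ d := by
  rcases le_or_gt x 1 with hx1 | hx1
  · exact (rpow_le_rpow_of_exponent_ge hx hx1 hq.1).trans
      (le_add_of_nonneg_right (rpow_nonneg hx.le d))
  · exact (rpow_le_rpow_of_exponent_le hx1.le hq.2).trans
      (le_add_of_nonneg_left (rpow_nonneg hx.le c))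

lemma _root_.HasDerivAt.rpow_one_div_self {J : ℝ → ℝ} {J' p : ℝ} (hJ : HasDerivAt J J' p)
    (hJp : 0 < J p) (hp : p ≠ 0) :
    HasDerivAt (fun q => J q ^ (1 / q))
      (1 / p ^ 2 * (J p ^ (1 / p)) ^ (1 - p) * (p * J' - J p * log (J p))) p := by
  have hinv : HasDerivAt (fun q : ℝ => 1 / q) (-1 / p ^ 2) p := by
    simpa [one_div, neg_div] using hasDerivAt_inv hp
  convert hJ.rpow hinv hJp using 1
  have hexp : 1 / p * (1 - p) = 1 / p - 1 := by field_simp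
  rw [← rpow_mul hJp.le, hexp, rpow_sub hJp, rpow_one]
  field_simp
  ring

end Real

open Real

section

variable {α : Type*} [MeasurableSpace α] {μ : Measure α} {f : α → ℝ}

lemma integral_rpow_mul_log_rpow (hpos : ∀ x, 0 < f x) (p : ℝ) :
    ∫ x, f x ^ p * log (f x ^ p) ∂μ = p * ∫ x, f x ^ p * log (f x) ∂μ := by
  rw [← integral_const_mul]
  congr 1 with x
  rw [log_rpow (hpos x)]
  ring

lemma MeasureTheory.Integrable.rpow_mul_abs_log (hpos : ∀ x, 0 < f x) {c : ℝ} (hc : c ≠ 0)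
    (h : Integrable (fun x => f x ^ c * log (f x ^ c)) μ) :
    Integrable (fun x => f x ^ c * |log (f x)|) μ := by
  refine (h.abs.const_mul |c|⁻¹).congr (ae_of_all _ fun x => ?_)
  simp only [log_rpow (hpos x), abs_mul, abs_of_pos (rpow_pos_of_pos (hpos x) c)]
  field_simp

lemma integral_pos_of_forall_pos [NeZero μ] {g : α → ℝ} (hg : ∀ x, 0 < g x)
    (hint : Integrable g μ) : 0 < ∫ x, g x ∂μ := by
  rw [integral_pos_iff_support_of_nonneg (fun x => (hg x).le) hint,
    show Function.support g = univ from eq_univ_of_forall fun x => (hg x).ne']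
  exact Measure.measure_univ_pos.mpr (NeZero.ne μ)

lemma hasDerivAt_integral_rpow (hmeas : Measurable f) (hpos : ∀ x, 0 < f x) {c d p : ℝ}
    (hcp : c < p) (hpd : p < d) (hp : Integrable (fun x => f x ^ p) μ)
    (hc : Integrable (fun x => f x ^ c * |log (f x)|) μ)
    (hd : Integrable (fun x => f x ^ d * |log (f x)|) μ) :
    HasDerivAt (fun q => ∫ x, f x ^ q ∂μ) (∫ x, f x ^ p * log (f x) ∂μ) p := by
  have hbound : ∀ x, ∀ q ∈ Icc c d,
      ‖f x ^ q * log (f x)‖ ≤ f x ^ c * |log (f x)| + f x ^ d * |log (f x)| := by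
    intro x q hq
    rw [norm_mul, norm_of_nonneg (rpow_nonneg (hpos x).le q), norm_eq_abs, ← add_mul]
    exact mul_le_mul_of_nonneg_right (rpow_le_rpow_add_rpow_of_mem_Icc (hpos x) hq)
      (abs_nonneg _)
  exact (hasDerivAt_integral_of_dominated_loc_of_deriv_le (Icc_mem_nhds hcp hpd)
    (.of_forall fun q => (hmeas.pow_const q).aestronglyMeasurable) hp
    ((hmeas.pow_const p).mul hmeas.log).aestronglyMeasurable
    (ae_of_all _ hbound) (hc.add hd)
    (ae_of_all _ fun x q _ => (hasStrictDerivAt_const_rpow (hpos x) q).hasDerivAt)).2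

end

/-- Derivative of the `L^p` norm in `p`: for a positive measurable `f` with
`f^q` and `f^q log(f^q)` integrable for `q` in an open interval around `p`,
`d/dp ‖f‖_{L^p} = (1/p²) ‖f‖_{L^p}^{1-p} · Ent_μ(f^p)`, where
`‖f‖_{L^p} = (∫ f^p dμ)^(1/p)` and
`Ent_μ(g) = ∫ g log g dμ − (∫ g dμ) log(∫ g dμ)`. -/
theorem lp_norm_hasDerivAt {α : Type*} [MeasurableSpace α] (μ : Measure α)
    (f : α → ℝ) (hmeas : Measurable f) (hpos : ∀ x, 0 < f x)
    (a b p : ℝ) (ha : 0 < a) (hp : p ∈ Ioo a b)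
    (hint : ∀ q ∈ Ioo a b, Integrable (fun x => f x ^ q) μ)
    (hint' : ∀ q ∈ Ioo a b,
      Integrable (fun x => f x ^ q * Real.log (f x ^ q)) μ) :
    HasDerivAt (fun q => (∫ x, f x ^ q ∂μ) ^ (1 / q))
      ((1 / p ^ 2) * ((∫ x, f x ^ p ∂μ) ^ (1 / p)) ^ (1 - p) *
        ((∫ x, f x ^ p * Real.log (f x ^ p) ∂μ)
          - (∫ x, f x ^ p ∂μ) * Real.log (∫ x, f x ^ p ∂μ)))
      p := by
  obtain ⟨hap, hpb⟩ := hp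
  have hp0 : 0 < p := ha.trans hap
  obtain ⟨c, hac, hcp⟩ := exists_between hap
  obtain ⟨d, hpd, hdb⟩ := exists_between hpb
  rcases eq_zero_or_neZero μ with rfl | hμ
  · have hzero : (fun q : ℝ => (0 : ℝ) ^ (1 / q)) =ᶠ[nhds p] fun _ => 0 := by
      filter_upwards [eventually_gt_nhds hp0] with q hq
      exact zero_rpow (one_div_pos.mpr hq).ne'
    simpa [zero_rpow (one_div_pos.mpr hp0).ne'] using
      (hasDerivAt_const p (0 : ℝ)).congr_of_eventuallyEq hzero
  have hJ := hasDerivAt_integral_rpow hmeas hpos hcp hpd (hint p ⟨hap, hpb⟩)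
    ((hint' c ⟨hac, hcp.trans hpb⟩).rpow_mul_abs_log hpos (ha.trans hac).ne')
    ((hint' d ⟨hap.trans hpd, hdb⟩).rpow_mul_abs_log hpos (hp0.trans hpd).ne')
  rw [integral_rpow_mul_log_rpow hpos]
  exact hJ.rpow_one_div_self (integral_pos_of_forall_pos (fun x => rpow_pos_of_pos (hpos x) p)
    (hint p ⟨hap, hpb⟩)) hp0.ne'
end

section
/- For the half-space H_a = {x ∈ ℝⁿ : ⟨x, u⟩ ≤ a} with u a unit vector, the Gaussian measure satisfies γ_n(H_a) = Φ(a) and the Gaussian boundary measure satisfies γ_n⁺(H_a) = φ(a), where Φ is the standard normal CDF, φ its density, and γ_n⁺(A) = liminf_{ε→0⁺} (γ_n(A_ε) − γ_n(A))/ε with A_ε the open ε-neighbourhood of A. -/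
open MeasureTheory Real Set Filter

/-- The standard Gaussian probability measure `γ_n` on `ℝⁿ`. -/
noncomputable def gaussianMeasureN (n : ℕ) : Measure (EuclideanSpace ℝ (Fin n)) :=
  volume.withDensity
    (fun x => ENNReal.ofReal ((2 * π) ^ (-(n : ℝ) / 2) * exp (-‖x‖ ^ 2 / 2)))

/-- The standard Gaussian density on `ℝ`. -/
noncomputable def gaussPdf (x : ℝ) : ℝ := (Real.sqrt (2 * π))⁻¹ * exp (-x ^ 2 / 2)

/-- The standard Gaussian cumulative distribution function. -/
noncomputable def gaussCdf (a : ℝ) : ℝ := ∫ x in Iic a, gaussPdf x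

/-!
The density `(2π)^(-n/2) e^(-‖x‖²/2)` has characteristic function `e^(-‖t‖²/2)`, so `γ_n` is
Mathlib's `stdGaussian`, a Gaussian measure whose image under the linear form `⟪·, u⟫` is the
centred Gaussian of variance `‖u‖² = 1`; this gives `γ_n(H_a) = Φ(a)`. For `ε > 0` the open
`ε`-neighbourhood of `H_a` is `{⟪x, u⟫ < a + ε}`, of measure `Φ(a + ε)`, so the difference
quotient is the slope `(Φ(a + ε) - Φ(a)) / ε`, which converges to `Φ'(a) = φ(a)`.
-/

open ProbabilityTheory
open scoped Topology

section StdGaussian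

variable {V : Type*} [NormedAddCommGroup V] [InnerProductSpace ℝ V] [FiniteDimensional ℝ V]
  [MeasurableSpace V] [BorelSpace V]

noncomputable def stdGaussianPDFReal (x : V) : ℝ :=
  (2 * π) ^ (-(Module.finrank ℝ V : ℝ) / 2) * exp (-‖x‖ ^ 2 / 2)

lemma integrable_stdGaussianPDFReal : Integrable (stdGaussianPDFReal (V := V)) := by
  have h := (GaussianFourier.integrable_cexp_neg_mul_sq_norm_add (V := V) (b := 1 / 2)
    (by norm_num) 0 0).norm
  refine (h.const_mul ((2 * π) ^ (-(Module.finrank ℝ V : ℝ) / 2))).congr ?_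
  filter_upwards with x
  rw [stdGaussianPDFReal, Complex.norm_exp]
  congr 2
  norm_num [← Complex.ofReal_pow, Complex.ofReal_re]
  ring

lemma charFun_withDensity_stdGaussianPDFReal (t : V) :
    charFun (volume.withDensity fun x : V => ENNReal.ofReal (stdGaussianPDFReal x)) t
      = Complex.exp (-‖t‖ ^ 2 / 2) := by
  have hintegrand : ∀ x : V,
      (ENNReal.ofReal (stdGaussianPDFReal x)).toReal • Complex.exp (inner ℝ x t * Complex.I)
        = ((2 * π) ^ (-(Module.finrank ℝ V : ℝ) / 2) : ℝ)
          * Complex.exp (-(1 / 2) * ‖x‖ ^ 2 + Complex.I * inner ℝ t x) := by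
    intro x
    rw [stdGaussianPDFReal, ENNReal.toReal_ofReal (by positivity), Complex.real_smul,
      Complex.ofReal_mul, Complex.ofReal_exp, mul_assoc, ← Complex.exp_add, real_inner_comm]
    push_cast
    ring_nf
  have h2π : (π : ℂ) / (1 / 2) = ((2 * π : ℝ) : ℂ) := by push_cast; ring
  rw [charFun_apply, integral_withDensity_eq_integral_toReal_smul₀
    integrable_stdGaussianPDFReal.aemeasurable.ennreal_ofReal
    (ae_of_all _ fun _ => ENNReal.ofReal_lt_top)]
  simp_rw [hintegrand]
  rw [integral_const_mul, GaussianFourier.integral_cexp_neg_mul_sq_norm_add (by norm_num),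
    ← mul_assoc, Complex.ofReal_cpow (by positivity), h2π,
    ← Complex.cpow_add _ _ (by exact_mod_cast two_pi_pos.ne'), Complex.I_sq,
    show ((-(Module.finrank ℝ V : ℝ) / 2 : ℝ) : ℂ) + (Module.finrank ℝ V : ℂ) / 2 = 0 by
      push_cast; ring, Complex.cpow_zero, one_mul]
  ring_nf

theorem withDensity_stdGaussianPDFReal :
    volume.withDensity (fun x : V => ENNReal.ofReal (stdGaussianPDFReal x)) = stdGaussian V := by
  have := isFiniteMeasure_withDensity_ofReal
    (integrable_stdGaussianPDFReal (V := V)).hasFiniteIntegral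
  refine Measure.ext_of_charFun (funext fun t => ?_)
  rw [charFun_withDensity_stdGaussianPDFReal, charFun_stdGaussian]

lemma map_inner_stdGaussian {u : V} (hu : ‖u‖ = 1) :
    (stdGaussian V).map (fun x => inner ℝ x u) = gaussianReal 0 1 := by
  have hL : (fun x => inner ℝ x u) = innerSL ℝ u := funext fun x => real_inner_comm u x
  rw [hL, IsGaussian.map_eq_gaussianReal, integral_strongDual_stdGaussian,
    variance_dual_stdGaussian, innerSL_apply_norm, hu]
  simp

lemma stdGaussian_setOf_inner_mem {u : V} (hu : ‖u‖ = 1) {s : Set ℝ} (hs : MeasurableSet s) :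
    stdGaussian V {x | inner ℝ x u ∈ s} = gaussianReal 0 1 s := by
  rw [← map_inner_stdGaussian hu, Measure.map_apply (f := fun x : V => inner ℝ x u)
    (by fun_prop) hs]
  rfl

end StdGaussian

lemma gaussianMeasureN_eq_stdGaussian (n : ℕ) :
    gaussianMeasureN n = stdGaussian (EuclideanSpace ℝ (Fin n)) := by
  rw [← withDensity_stdGaussianPDFReal]
  simp only [stdGaussianPDFReal, finrank_euclideanSpace_fin]
  rfl

lemma thickening_setOf_inner_le {E : Type*} [NormedAddCommGroup E] [InnerProductSpace ℝ E]
    {u : E} (hu : ‖u‖ = 1) (a : ℝ) {ε : ℝ} (hε : 0 < ε) :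
    Metric.thickening ε {x | inner ℝ x u ≤ a} = {x | inner ℝ x u < a + ε} := by
  ext x
  rw [Metric.mem_thickening_iff]
  constructor
  · rintro ⟨y, hy : inner ℝ y u ≤ a, hxy⟩
    have h := real_inner_le_norm (x - y) u
    rw [hu, mul_one, ← dist_eq_norm, inner_sub_left] at h
    show inner ℝ x u < a + ε
    linarith
  · intro (hx : inner ℝ x u < a + ε)
    -- the nearest point of the half-space
    set t := max (inner ℝ x u - a) 0
    refine ⟨x - t • u, ?_, ?_⟩
    · show inner ℝ (x - t • u) u ≤ a
      rw [inner_sub_left, real_inner_smul_left, real_inner_self_eq_norm_sq, hu]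
      linarith [le_max_left (inner ℝ x u - a) 0]
    · rw [dist_eq_norm, sub_sub_cancel, norm_smul, hu, mul_one,
        Real.norm_of_nonneg (le_max_right _ _)]
      exact max_lt (by linarith) hε

lemma hasDerivAt_integral_Iic {f : ℝ → ℝ} (hf : Integrable f) {a : ℝ} (hfa : ContinuousAt f a) :
    HasDerivAt (fun t => ∫ x in Iic t, f x) (f a) a := by
  have hFTC := (intervalIntegral.integral_hasDerivAt_right (hf.intervalIntegrable (a := a))
    hf.aestronglyMeasurable.stronglyMeasurableAtFilter hfa).const_add (∫ x in Iic a, f x)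
  refine hFTC.congr_of_eventuallyEq (Eventually.of_forall fun t => ?_)
  show ∫ x in Iic t, f x = (∫ x in Iic a, f x) + ∫ x in a..t, f x
  rw [← intervalIntegral.integral_Iic_sub_Iic hf.integrableOn hf.integrableOn]
  ring

lemma gaussianPDFReal_zero_one : gaussianPDFReal 0 1 = gaussPdf := by
  ext x
  simp [gaussianPDFReal, gaussPdf]

lemma gaussCdf_nonneg (t : ℝ) : 0 ≤ gaussCdf t :=
  setIntegral_nonneg measurableSet_Iic fun x _ => by unfold gaussPdf; positivity

lemma hasDerivAt_gaussCdf (a : ℝ) : HasDerivAt gaussCdf (gaussPdf a) a :=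
  hasDerivAt_integral_Iic (gaussianPDFReal_zero_one ▸ integrable_gaussianPDFReal 0 1)
    (by unfold gaussPdf; fun_prop)

lemma gaussianReal_Iic (a : ℝ) : gaussianReal 0 1 (Iic a) = ENNReal.ofReal (gaussCdf a) := by
  rw [gaussianReal_apply_eq_integral _ one_ne_zero, gaussianPDFReal_zero_one, gaussCdf]

lemma gaussianReal_Iio (a : ℝ) : gaussianReal 0 1 (Iio a) = ENNReal.ofReal (gaussCdf a) := by
  rw [gaussianReal_apply_eq_integral _ one_ne_zero, gaussianPDFReal_zero_one, gaussCdf,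
    setIntegral_congr_set Iio_ae_eq_Iic]

/-- For the half-space `H_a = {x : ⟨x,u⟩ ≤ a}` (with `|u| = 1`), the Gaussian
measure is `γ_n(H_a) = Φ(a)` and the Gaussian boundary measure
`γ_n⁺(H_a) = liminf_{ε→0⁺} (γ_n((H_a)_ε) − γ_n(H_a))/ε` equals `φ(a)`. -/
theorem gaussian_halfspace_measure_and_perimeter (n : ℕ)
    (u : EuclideanSpace ℝ (Fin n)) (hu : ‖u‖ = 1) (a : ℝ) :
    gaussianMeasureN n {x | inner ℝ x u ≤ a} = ENNReal.ofReal (gaussCdf a) ∧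
    Filter.liminf
      (fun ε : ℝ =>
        ((gaussianMeasureN n (Metric.thickening ε {x | inner ℝ x u ≤ a})).toReal
          - (gaussianMeasureN n {x | inner ℝ x u ≤ a}).toReal) / ε)
      (nhdsWithin 0 (Ioi 0)) = gaussPdf a := by
  rw [gaussianMeasureN_eq_stdGaussian]
  have hIic : ∀ t, stdGaussian _ {x | inner ℝ x u ≤ t} = ENNReal.ofReal (gaussCdf t) :=
    fun t => (stdGaussian_setOf_inner_mem hu measurableSet_Iic).trans (gaussianReal_Iic t)
  have hIio : ∀ t, stdGaussian _ {x | inner ℝ x u < t} = ENNReal.ofReal (gaussCdf t) :=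
    fun t => (stdGaussian_setOf_inner_mem hu measurableSet_Iio).trans (gaussianReal_Iio t)
  refine ⟨hIic a, ?_⟩
  have hslope : (fun ε : ℝ => ε⁻¹ • (gaussCdf (a + ε) - gaussCdf a)) =ᶠ[𝓝[>] 0] fun ε =>
      ((stdGaussian _ (Metric.thickening ε {x | inner ℝ x u ≤ a})).toReal
        - (stdGaussian _ {x | inner ℝ x u ≤ a}).toReal) / ε := by
    filter_upwards [self_mem_nhdsWithin] with ε (hε : 0 < ε)
    rw [thickening_setOf_inner_le hu a hε, hIio, hIic, ENNReal.toReal_ofReal (gaussCdf_nonneg _),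
      ENNReal.toReal_ofReal (gaussCdf_nonneg _), smul_eq_mul, inv_mul_eq_div]
  exact ((hasDerivAt_gaussCdf a).tendsto_slope_zero_right.congr' hslope).liminf_eq
end
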